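/- arXiv:2101.00617 — 3 statements merged into one kernel-verified Lean document; each statement's English description precedes it below -/
import Mathlib

section
/- For all integers j ≥ 2 and n ≥ 2, m_j(K_{1,2}, P_4, nK_2) ≥ ⌊2n/j⌋ + 1. Equivalently, with t = ⌊2n/j⌋, there exists a 3-coloring of the edges of K_{j×t} containing no copy of K_{1,2} in the first color, no copy of P_4 in the second color, and no matching nK_2 in the third color. -/
open SimpleGraph

/-- The complete multipartite graph `K_{j x t}` with `j` parts, each of size `t`. -/
def multiK (j t : ℕ) : SimpleGraph (Fin j × Fin t) where
  Adj a b := a.1 ≠ b.1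
  symm := ⟨fun _ _ h => Ne.symm h⟩
  loopless := ⟨fun _ h => h rfl⟩

/-- `G` contains a copy of `H`. -/
def Contains {α β : Type*} (G : SimpleGraph α) (H : SimpleGraph β) : Prop :=
  ∃ f : β → α, Function.Injective f ∧ ∀ ⦃a b⦄, H.Adj a b → G.Adj (f a) (f b)

/-- The monochromatic subgraph of `G` in color `i` under the edge-coloring `c`. -/
def colorClass {α : Type*} {k : ℕ} (G : SimpleGraph α) (c : Sym2 α → Fin k) (i : Fin k) :
    SimpleGraph α where
  Adj a b := G.Adj a b ∧ c s(a, b) = i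
  symm := ⟨fun _ _ h => ⟨h.1.symm, by rw [Sym2.eq_swap]; exact h.2⟩⟩
  loopless := ⟨fun a h => G.loopless.irrefl a h.1⟩

/-- The stripe `nK₂`: the graph consisting of `n` pairwise disjoint edges. -/
def stripe (n : ℕ) : SimpleGraph (Fin n × Fin 2) where
  Adj a b := a.1 = b.1 ∧ a.2 ≠ b.2
  symm := ⟨fun _ _ h => ⟨h.1.symm, h.2.symm⟩⟩
  loopless := ⟨fun _ h => h.2 rfl⟩

/-- Every 3-coloring of the edges of `K_{j x t}` yields a copy of `K_{1,2}` in color 0,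
or of `P₄` in color 1, or of `nK₂` in color 2. -/
def Arrows3 (j t n : ℕ) : Prop :=
  ∀ c : Sym2 (Fin j × Fin t) → Fin 3,
    Contains (colorClass (multiK j t) c 0) (pathGraph 3) ∨
    Contains (colorClass (multiK j t) c 1) (pathGraph 4) ∨
    Contains (colorClass (multiK j t) c 2) (stripe n)

/-- Every 2-coloring of the edges of `K_{j x t}` yields a copy of `nK₂` in color 0
or of `C₇` in color 1. -/
def ArrowsC7 (j t n : ℕ) : Prop :=
  ∀ c : Sym2 (Fin j × Fin t) → Fin 2,
    Contains (colorClass (multiK j t) c 0) (stripe n) ∨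
    Contains (colorClass (multiK j t) c 1) (cycleGraph 7)

/-! Give every edge at one vertex `v` color 1 and all other edges color 2. Color 0 is then
empty, every color-1 edge meets `v`, so there is no color-1 `P₄`, and `v` is isolated in
color 2, so a color-2 `nK₂` would need `2n` vertices other than `v`. With `t = ⌊2n/j⌋` we
have `jt ≤ 2n`, so there are not that many. -/

section

variable {α β : Type*}

lemma Contains.card_le [Fintype α] [Fintype β] {G : SimpleGraph α} {H : SimpleGraph β}
    (h : Contains G H) : Fintype.card β ≤ Fintype.card α :=
  let ⟨f, hf, _⟩ := h
  Fintype.card_le_of_injective f hf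

lemma not_contains_of_forall_not_adj {G : SimpleGraph α} {H : SimpleGraph β}
    (hG : ∀ a b, ¬G.Adj a b) {x y : β} (hH : H.Adj x y) : ¬Contains G H :=
  fun ⟨_, _, hf⟩ => hG _ _ (hf hH)

lemma not_contains_pathGraph_four_of_forall_adj {G : SimpleGraph α} {v : α}
    (hv : ∀ a b, G.Adj a b → a = v ∨ b = v) : ¬Contains G (pathGraph 4) := by
  rintro ⟨f, hf, hadj⟩
  have h01 := hv _ _ (hadj (pathGraph_adj.mpr (Or.inl rfl) : (pathGraph 4).Adj 0 1))
  have h23 := hv _ _ (hadj (pathGraph_adj.mpr (Or.inl rfl) : (pathGraph 4).Adj 2 3))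
  rcases h01 with h01 | h01 <;> rcases h23 with h23 | h23 <;>
    exact absurd (hf (h01.trans h23.symm)) (by decide)

lemma not_contains_stripe_of_isolated [Fintype α] {G : SimpleGraph α} {v : α} {n : ℕ}
    (hv : ∀ b, ¬G.Adj v b) (hcard : Fintype.card α ≤ 2 * n) : ¬Contains G (stripe n) := by
  rintro ⟨f, hf, hadj⟩
  have hmiss : v ∉ Set.range f := by
    rintro ⟨x, rfl⟩
    have hne : ∀ i : Fin 2, i ≠ i + 1 := by decide
    exact hv _ (hadj (show (stripe n).Adj x (x.1, x.2 + 1) from ⟨rfl, hne x.2⟩))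
  have := Fintype.card_lt_of_injective_of_notMem f hf hmiss
  simp only [Fintype.card_prod, Fintype.card_fin] at this
  omega

def starColoring [DecidableEq α] (v : α) (e : Sym2 α) : Fin 3 :=
  if v ∈ e then 1 else 2

variable [DecidableEq α]

lemma starColoring_ne_zero (v : α) (e : Sym2 α) : starColoring v e ≠ 0 := by
  unfold starColoring; split_ifs <;> decide

lemma colorClass_starColoring_one_adj {G : SimpleGraph α} {v a b : α}
    (h : (colorClass G (starColoring v) 1).Adj a b) : a = v ∨ b = v := by
  have hc := h.2
  unfold starColoring at hc
  split_ifs at hc with hmem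
  · exact (Sym2.mem_iff.mp hmem).imp Eq.symm Eq.symm
  · exact absurd hc (by decide)

lemma colorClass_starColoring_two_not_adj (G : SimpleGraph α) (v b : α) :
    ¬(colorClass G (starColoring v) 2).Adj v b := fun h => by
  have hc := h.2
  rw [starColoring, if_pos (Sym2.mem_mk_left v b)] at hc
  exact absurd hc (by decide)

end

lemma exists_good_coloring {α : Type*} [Fintype α] (G : SimpleGraph α) {n : ℕ} (hn : 0 < n)
    (hcard : Fintype.card α ≤ 2 * n) :
    ∃ c : Sym2 α → Fin 3,
      ¬ Contains (colorClass G c 0) (pathGraph 3) ∧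
      ¬ Contains (colorClass G c 1) (pathGraph 4) ∧
      ¬ Contains (colorClass G c 2) (stripe n) := by
  classical
  rcases isEmpty_or_nonempty α with hempty | hne
  · refine ⟨fun _ => 0, fun h => ?_, fun h => ?_, fun h => ?_⟩ <;>
      simpa [Fintype.card_eq_zero, hn.ne'] using h.card_le
  · obtain ⟨v⟩ := hne
    refine ⟨starColoring v, ?_, ?_, ?_⟩
    · exact not_contains_of_forall_not_adj (fun a b h => starColoring_ne_zero v _ h.2)
        (pathGraph_adj.mpr (Or.inl rfl) : (pathGraph 3).Adj 0 1)
    · exact not_contains_pathGraph_four_of_forall_adj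
        (fun _ _ => colorClass_starColoring_one_adj)
    · exact not_contains_stripe_of_isolated (colorClass_starColoring_two_not_adj G v) hcard

theorem stmt1_general (j n : ℕ) (hn : 2 ≤ n) :
    (∀ t : ℕ, 0 < t → Arrows3 j t n → 2 * n / j + 1 ≤ t) ∧
    (∃ c : Sym2 (Fin j × Fin (2 * n / j)) → Fin 3,
      ¬ Contains (colorClass (multiK j (2 * n / j)) c 0) (pathGraph 3) ∧
      ¬ Contains (colorClass (multiK j (2 * n / j)) c 1) (pathGraph 4) ∧
      ¬ Contains (colorClass (multiK j (2 * n / j)) c 2) (stripe n)) := by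
  have hgood (t : ℕ) (ht : t ≤ 2 * n / j) :=
    exists_good_coloring (multiK j t) (n := n) (by omega) <| by
      simpa using (Nat.mul_le_mul_left j ht).trans (Nat.mul_div_le (2 * n) j)
  refine ⟨fun t _ hArrows => ?_, hgood _ le_rfl⟩
  by_contra! hlt
  obtain ⟨c, h0, h1, h2⟩ := hgood t (by omega)
  rcases hArrows c with h | h | h <;> contradiction

theorem stmt1 (j n : ℕ) (hj : 2 ≤ j) (hn : 2 ≤ n) :
    (∀ t : ℕ, 0 < t → Arrows3 j t n → 2 * n / j + 1 ≤ t) ∧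
    (∃ c : Sym2 (Fin j × Fin (2 * n / j)) → Fin 3,
      ¬ Contains (colorClass (multiK j (2 * n / j)) c 0) (pathGraph 3) ∧
      ¬ Contains (colorClass (multiK j (2 * n / j)) c 1) (pathGraph 4) ∧
      ¬ Contains (colorClass (multiK j (2 * n / j)) c 2) (stripe n)) :=
  stmt1_general j n hn
end

section
/- Let G be the graph K_4 − e, the complete graph on 4 vertices with one edge removed. For every subgraph H of G, either H contains a copy of the star K_{1,2}, or the complement of H within G (the graph on the same vertices whose edges are the edges of G not in H) contains a copy of the path P_4. -/
open SimpleGraph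

/-- The graph `K₄ - e`: the complete graph on 4 vertices with the edge `{0, 1}` removed. -/
def K4e : SimpleGraph (Fin 4) where
  Adj a b := a ≠ b ∧ ¬(a = 0 ∧ b = 1) ∧ ¬(a = 1 ∧ b = 0)
  symm := ⟨fun _ _ h => ⟨h.1.symm, fun hc => h.2.2 ⟨hc.2, hc.1⟩, fun hc => h.2.1 ⟨hc.2, hc.1⟩⟩⟩
  loopless := ⟨fun _ h => h.1 rfl⟩

/-!
Two edges of `H` sharing a vertex form a `K_{1,2}`, so otherwise `H` is a matching and avoids every
edge meeting one of its own. If `{2, 3} ∈ H`, this rules out each edge of the path `2-0-3-1`; if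
`{0, 2}` or `{1, 3}` is in `H`, each edge of `0-3-2-1`; and the path `0-2-3-1` consists of the
edges `{0, 2}`, `{2, 3}`, `{1, 3}` themselves.
-/

section Paths

variable {V : Type*} {G : SimpleGraph V} {a b c d : V}

lemma contains_pathGraph_three_of_adj (hab : G.Adj a b) (hbc : G.Adj b c) (hac : a ≠ c) :
    Contains G (pathGraph 3) := by
  refine ⟨![a, b, c], ?_, ?_⟩
  · intro i j hij
    fin_cases i <;> fin_cases j <;> simp_all [hab.ne, hbc.ne, hab.ne.symm, hbc.ne.symm, hac.symm]
  · intro i j hij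
    rw [pathGraph_adj] at hij
    fin_cases i <;> fin_cases j <;> simp_all [hab.symm, hbc.symm]

lemma contains_pathGraph_four_of_adj (hab : G.Adj a b) (hbc : G.Adj b c) (hcd : G.Adj c d)
    (hac : a ≠ c) (had : a ≠ d) (hbd : b ≠ d) : Contains G (pathGraph 4) := by
  refine ⟨![a, b, c, d], ?_, ?_⟩
  · intro i j hij
    fin_cases i <;> fin_cases j <;>
      simp_all [hab.ne, hbc.ne, hcd.ne, hab.ne.symm, hbc.ne.symm, hcd.ne.symm, hac.symm, had.symm,
        hbd.symm]
  · intro i j hij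
    rw [pathGraph_adj] at hij
    fin_cases i <;> fin_cases j <;> simp_all [hab.symm, hbc.symm, hcd.symm]

lemma eq_of_adj_of_adj_of_not_contains_pathGraph_three (hG : ¬Contains G (pathGraph 3))
    (hab : G.Adj a b) (hac : G.Adj a c) : b = c :=
  by_contra fun hbc => hG (contains_pathGraph_three_of_adj hab.symm hac hbc)

end Paths

theorem stmt3_general (H : SimpleGraph (Fin 4)) :
    Contains H (pathGraph 3) ∨ Contains (K4e \ H) (pathGraph 4) := by
  refine or_iff_not_imp_left.2 fun hP3 => ?_
  have hmatching {a b c : Fin 4} (hab : H.Adj a b) (hac : H.Adj a c) : b = c :=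
    eq_of_adj_of_adj_of_not_contains_pathGraph_three hP3 hab hac
  -- each remaining goal is `K4e.Adj x y` or `¬H.Adj x y`, the latter refuted by `hmatching`
  by_cases h23 : H.Adj 2 3
  · refine contains_pathGraph_four_of_adj (a := 2) (b := 0) (c := 3) (d := 1)
      ⟨?_, ?_⟩ ⟨?_, ?_⟩ ⟨?_, ?_⟩ (by decide) (by decide) (by decide)
    all_goals grind [K4e, SimpleGraph.Adj.symm]
  by_cases h : H.Adj 0 2 ∨ H.Adj 1 3
  · refine contains_pathGraph_four_of_adj (a := 0) (b := 3) (c := 2) (d := 1)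
      ⟨?_, ?_⟩ ⟨?_, ?_⟩ ⟨?_, ?_⟩ (by decide) (by decide) (by decide)
    all_goals grind [K4e, SimpleGraph.Adj.symm]
  · refine contains_pathGraph_four_of_adj (a := 0) (b := 2) (c := 3) (d := 1)
      ⟨?_, ?_⟩ ⟨?_, ?_⟩ ⟨?_, ?_⟩ (by decide) (by decide) (by decide)
    all_goals grind [K4e, SimpleGraph.Adj.symm]

theorem stmt3 (H : SimpleGraph (Fin 4)) (hH : H ≤ K4e) :
    Contains H (pathGraph 3) ∨ Contains (K4e \ H) (pathGraph 4) :=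
  stmt3_general H
end

section
/- Every 2-coloring of the edges of the complete 4-partite graph K_{4×2} (four parts of size 2) contains a matching 2K_2 in the first color or a cycle C_7 in the second color; moreover there is a 2-coloring of the edges of K_{4×1} = K_4 containing neither. Hence m_4(2K_2, C_7) = 2. -/
open SimpleGraph

/-! If the first color has no two disjoint edges, its edges form a star or a triangle. Either way
there are vertices `a`, `b`, `y` in three different parts such that every edge of the first color
passes through `a` or is the edge `by`. Permuting the parts and rotating inside each part moves
`a`, `b`, `y` to `(0, 0)`, `(1, 0)`, `(2, 0)`, and the seven vertices other than `(0, 0)` carry a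
`7`-cycle avoiding the edge `(1, 0)(2, 0)`; its image lies entirely in the second color.
On `K₄` the coloring with only the second color works, since `K₄` has too few vertices for `C₇`. -/

section Contains

variable {α β : Type*}

theorem not_contains_of_card_lt [Fintype α] [Fintype β] {G : SimpleGraph α} {H : SimpleGraph β}
    (hcard : Fintype.card α < Fintype.card β) : ¬ Contains G H := fun ⟨f, hf, _⟩ =>
  (Fintype.card_le_of_injective f hf).not_gt hcard

theorem not_contains_of_adj {G : SimpleGraph α} {H : SimpleGraph β} {x y : β}
    (hxy : H.Adj x y) (hG : ∀ a b, ¬ G.Adj a b) : ¬ Contains G H :=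
  fun ⟨_, _, hf⟩ => hG _ _ (hf hxy)

theorem contains_cycleGraph {G : SimpleGraph α} {n : ℕ} (f : Fin (n + 2) → α)
    (hf : Function.Injective f) (hadj : ∀ i, G.Adj (f i) (f (i + 1))) :
    Contains G (cycleGraph (n + 2)) := by
  refine ⟨f, hf, fun i j hij => ?_⟩
  rcases cycleGraph_adj.mp hij with h | h
  · rw [← sub_add_cancel i j, h, add_comm]
    exact (hadj j).symm
  · rw [← sub_add_cancel j i, h, add_comm]
    exact hadj i

theorem contains_stripe_two {G : SimpleGraph α} {a b a' b' : α} (hab : G.Adj a b)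
    (hab' : G.Adj a' b') (h₁ : a ≠ a') (h₂ : a ≠ b') (h₃ : b ≠ a') (h₄ : b ≠ b') :
    Contains G (stripe 2) := by
  refine ⟨fun x => ![![a, b], ![a', b']] x.1 x.2, fun x y hxy => ?_, fun x y hxy => ?_⟩
  · have := hab.ne; have := hab'.ne
    fin_cases x <;> fin_cases y <;> simp_all [eq_comm]
  · obtain ⟨hxy, hne⟩ := hxy
    fin_cases x <;> fin_cases y <;> simp_all [hab.symm, hab'.symm]

end Contains

theorem colorClass_adj_one_of_not_zero {α : Type*} {G : SimpleGraph α} {c : Sym2 α → Fin 2}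
    {a b : α} (hadj : G.Adj a b) (h : c s(a, b) ≠ 0) : (colorClass G c 1).Adj a b :=
  ⟨hadj, by omega⟩

theorem SimpleGraph.star_or_triangle_of_pairwise_meet {V : Type*} [Nonempty V] (H : SimpleGraph V)
    (hmeet : ∀ ⦃a b a' b'⦄, H.Adj a b → H.Adj a' b' → a = a' ∨ a = b' ∨ b = a' ∨ b = b') :
    (∃ v, ∀ ⦃a b⦄, H.Adj a b → a = v ∨ b = v) ∨
      ∃ x y z, H.Adj x y ∧ H.Adj x z ∧ H.Adj y z ∧ ∀ ⦃a b⦄, H.Adj a b → a = x ∨ a = y ∨ a = z := by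
  by_cases hstar : ∃ v, ∀ ⦃a b⦄, H.Adj a b → a = v ∨ b = v
  · exact .inl hstar
  push Not at hstar
  -- An edge avoiding `x` meets `xy` in `y`; an edge avoiding `y` then closes the triangle.
  obtain ⟨x, y, hxy, -, -⟩ := hstar (Classical.arbitrary V)
  obtain ⟨z, hyz, hzx⟩ : ∃ z, H.Adj y z ∧ z ≠ x := by
    obtain ⟨u, w, huw, hux, hwx⟩ := hstar x
    rcases hmeet hxy huw with h | h | rfl | rfl
    exacts [absurd h.symm hux, absurd h.symm hwx, ⟨w, huw, hwx⟩, ⟨u, huw.symm, hux⟩]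
  have hxz : H.Adj x z := by
    obtain ⟨u, w, huw, huy, hwy⟩ := hstar y
    have := hmeet hxy huw; have := hmeet hyz huw; have := huw.symm
    grind
  refine .inr ⟨x, y, z, hxy, hxz, hyz, fun a b hab => ?_⟩
  have := hmeet hab hxy; have := hmeet hab hyz; have := hmeet hab hxz
  have := hxy.ne; have := hyz.ne
  grind

def multiK.relabel {j j' t : ℕ} (π : Fin j ↪ Fin j') (τ : Fin j → Fin t) :
    multiK j t ↪g multiK j' t where
  toFun x := (π x.1, x.2 + τ x.1)
  inj' x y h := by
    obtain ⟨h₁, h₂⟩ := Prod.mk.inj h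
    have h₁ := π.injective h₁
    exact Prod.ext h₁ (add_right_cancel (h₁ ▸ h₂))
  map_rel_iff' := π.injective.ne_iff

theorem injective_vecCons_four {α : Type*} {a b c d : α} (hab : a ≠ b) (hac : a ≠ c) (had : a ≠ d)
    (hbc : b ≠ c) (hbd : b ≠ d) (hcd : c ≠ d) : Function.Injective ![a, b, c, d] := by
  rw [← List.nodup_ofFn]
  simp_all

def sevenCycle : Fin 7 → Fin 4 × Fin 2 := ![(1, 0), (3, 0), (2, 0), (0, 1), (1, 1), (2, 1), (3, 1)]

theorem sevenCycle_spec : Function.Injective sevenCycle ∧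
    ∀ i, (multiK 4 2).Adj (sevenCycle i) (sevenCycle (i + 1)) ∧ sevenCycle i ≠ (0, 0) ∧
      s(sevenCycle i, sevenCycle (i + 1)) ≠ s((1, 0), (2, 0)) := by
  unfold multiK; decide

theorem colorClass_one_contains_cycleGraph_seven (c : Sym2 (Fin 4 × Fin 2) → Fin 2)
    {a b y : Fin 4 × Fin 2} (hab : a.1 ≠ b.1) (hay : a.1 ≠ y.1) (hby : b.1 ≠ y.1)
    (h : ∀ ⦃u w⦄, (colorClass (multiK 4 2) c 0).Adj u w → u = a ∨ w = a ∨ s(u, w) = s(b, y)) :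
    Contains (colorClass (multiK 4 2) c 1) (cycleGraph 7) := by
  obtain ⟨p, hpa, hpb, hpy⟩ : ∃ p : Fin 4, p ≠ a.1 ∧ p ≠ b.1 ∧ p ≠ y.1 := by
    have hfree : ∀ q r s : Fin 4, ∃ p, p ≠ q ∧ p ≠ r ∧ p ≠ s := by decide
    exact hfree _ _ _
  let ψ := multiK.relabel
    ⟨![a.1, b.1, y.1, p], injective_vecCons_four hab hay hpa.symm hby hpb.symm hpy.symm⟩
    ![a.2, b.2, y.2, 0]
  have hψa : ψ (0, 0) = a := by simp [ψ, multiK.relabel]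
  have hψb : ψ (1, 0) = b := by simp [ψ, multiK.relabel]
  have hψy : ψ (2, 0) = y := by simp [ψ, multiK.relabel]
  obtain ⟨hinj, hcycle⟩ := sevenCycle_spec
  refine contains_cycleGraph (n := 5) (ψ ∘ sevenCycle) (ψ.injective.comp hinj) fun i => ?_
  obtain ⟨hadj, hne₀, hne⟩ := hcycle i
  have hadj' := ψ.map_adj_iff.mpr hadj
  refine colorClass_adj_one_of_not_zero hadj' fun h₀ => ?_
  rcases h ⟨hadj', h₀⟩ with h | h | h
  · exact hne₀ (ψ.injective (h.trans hψa.symm))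
  · exact (hcycle (i + 1)).2.1 (ψ.injective (h.trans hψa.symm))
  · rw [← hψb, ← hψy] at h
    exact hne (Sym2.map.injective ψ.injective (by simpa using h))

theorem arrowsC7_four_two_two : ArrowsC7 4 2 2 := by
  intro c
  by_cases hmeet : ∀ ⦃a b a' b'⦄, (colorClass (multiK 4 2) c 0).Adj a b →
      (colorClass (multiK 4 2) c 0).Adj a' b' → a = a' ∨ a = b' ∨ b = a' ∨ b = b'
  · right
    rcases (colorClass (multiK 4 2) c 0).star_or_triangle_of_pairwise_meet hmeet with
      ⟨v, hv⟩ | ⟨x, y, z, hxy, hxz, hyz, hmem⟩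
    · have hparts : ∀ p : Fin 4, p ≠ p + 1 ∧ p ≠ p + 2 ∧ p + 1 ≠ p + 2 := by decide
      obtain ⟨h₁, h₂, h₃⟩ := hparts v.1
      exact colorClass_one_contains_cycleGraph_seven c (b := (v.1 + 1, 0))
        (y := (v.1 + 2, 0)) h₁ h₂ h₃ fun u w huw => (hv huw).imp_right .inl
    · refine colorClass_one_contains_cycleGraph_seven c hxy.1 hxz.1 hyz.1
        fun u w huw => ?_
      rcases hmem huw with rfl | rfl | rfl
      · exact .inl rfl
      all_goals rcases hmem huw.symm with rfl | rfl | rfl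
      all_goals first
        | exact .inr (.inl rfl) | exact .inr (.inr rfl) | exact .inr (.inr Sym2.eq_swap)
        | exact (huw.ne rfl).elim
  · left
    push Not at hmeet
    obtain ⟨a, b, a', b', hab, hab', h₁, h₂, h₃, h₄⟩ := hmeet
    exact contains_stripe_two hab hab' h₁ h₂ h₃ h₄

theorem stmt17 :
    ArrowsC7 4 2 2 ∧
    (∃ c : Sym2 (Fin 4 × Fin 1) → Fin 2,
      ¬ Contains (colorClass (multiK 4 1) c 0) (stripe 2) ∧
      ¬ Contains (colorClass (multiK 4 1) c 1) (cycleGraph 7)) ∧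
    IsLeast {t : ℕ | 0 < t ∧ ArrowsC7 4 t 2} 2 := by
  have hK₄ : ∃ c : Sym2 (Fin 4 × Fin 1) → Fin 2,
      ¬ Contains (colorClass (multiK 4 1) c 0) (stripe 2) ∧
      ¬ Contains (colorClass (multiK 4 1) c 1) (cycleGraph 7) :=
    ⟨fun _ => 1, not_contains_of_adj (x := (0, 0)) (y := (0, 1)) ⟨rfl, by decide⟩ fun _ _ h => by
      simp [colorClass] at h, not_contains_of_card_lt (by simp)⟩
  refine ⟨arrowsC7_four_two_two, hK₄, ⟨two_pos, arrowsC7_four_two_two⟩, fun t ⟨ht, hA⟩ => ?_⟩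
  by_contra! hlt
  obtain rfl : t = 1 := by omega
  obtain ⟨c, h₀, h₁⟩ := hK₄
  exact (hA c).elim h₀ h₁
end
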